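/- arXiv:1612.01089 — 2 statements merged into one kernel-verified Lean document; each statement's English description precedes it below -/
import Mathlib

section
/- Let μ and ν be Borel probability measures on ℝ, with F_μ(z) = 1/G_μ(z), h_μ(z) = F_μ(z) − z, and similarly for ν, on the upper half-plane ℂ⁺. Fix b ∈ ℂ⁺, let ω₁(b) ∈ ℂ⁺ be a fixed point of ω ↦ h_ν(h_μ(ω) + b) + b, and set ω₂(b) = h_μ(ω₁(b)) + b. Then ω₂(b) ∈ ℂ⁺ is a fixed point of ω ↦ h_μ(h_ν(ω) + b) + b, and the subordination identities F_μ(ω₁(b)) = F_ν(ω₂(b)) = ω₁(b) + ω₂(b) − b hold; in particular G_μ(ω₁(b)) = G_ν(ω₂(b)). -/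
/-!
Everything except `0 < Im ω₂` is algebra in the definitions of `F` and `h`. Positivity of
`Im ω₂ = Im h_μ(ω₁) + Im b` comes from the Nevanlinna inequality `Im z ≤ Im F_μ(z)`: writing
`I = ∫ |z - x|⁻² dμ`, one has `Im G_μ(z) = -Im z · I`, and Jensen's inequality gives `|G_μ(z)|² ≤ I`,
so `Im F_μ(z) = Im z · I / |G_μ(z)|² ≥ Im z`.
-/

open MeasureTheory Complex

noncomputable def cauchyTransform (μ : Measure ℝ) (z : ℂ) : ℂ :=
  ∫ x : ℝ, (z - (x : ℂ))⁻¹ ∂μ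

section CauchyTransform

variable {μ : Measure ℝ} {z : ℂ}

lemma sub_ofReal_ne_zero (hz : 0 < z.im) (x : ℝ) : z - (x : ℂ) ≠ 0 :=
  sub_ne_zero.mpr fun h => by simp [h] at hz

lemma norm_inv_sub_ofReal_le (hz : 0 < z.im) (x : ℝ) : ‖(z - (x : ℂ))⁻¹‖ ≤ z.im⁻¹ := by
  rw [norm_inv]
  refine inv_anti₀ hz ?_
  calc z.im = (z - (x : ℂ)).im := by simp
    _ ≤ ‖z - (x : ℂ)‖ := (le_abs_self _).trans (abs_im_le_norm _)

lemma continuous_inv_sub_ofReal (hz : 0 < z.im) : Continuous fun x : ℝ => (z - (x : ℂ))⁻¹ :=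
  (continuous_const.sub continuous_ofReal).inv₀ (sub_ofReal_ne_zero hz)

lemma integrable_inv_sub_ofReal [IsFiniteMeasure μ] (hz : 0 < z.im) :
    Integrable (fun x : ℝ => (z - (x : ℂ))⁻¹) μ :=
  (integrable_const z.im⁻¹).mono' (continuous_inv_sub_ofReal hz).aestronglyMeasurable
    (.of_forall (norm_inv_sub_ofReal_le hz))

lemma integrable_norm_inv_sub_ofReal_sq [IsFiniteMeasure μ] (hz : 0 < z.im) :
    Integrable (fun x : ℝ => ‖(z - (x : ℂ))⁻¹‖ ^ 2) μ :=
  (integrable_const (z.im⁻¹ ^ 2)).mono'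
    ((continuous_inv_sub_ofReal hz).norm.pow 2).aestronglyMeasurable
    (.of_forall fun x => by
      rw [norm_pow, norm_norm]
      exact pow_le_pow_left₀ (norm_nonneg _) (norm_inv_sub_ofReal_le hz x) 2)

lemma im_cauchyTransform [IsFiniteMeasure μ] (hz : 0 < z.im) :
    (cauchyTransform μ z).im = -z.im * ∫ x : ℝ, ‖(z - (x : ℂ))⁻¹‖ ^ 2 ∂μ := by
  rw [← integral_const_mul]
  refine (integral_im (integrable_inv_sub_ofReal hz)).symm.trans
    (integral_congr_ae (.of_forall fun x => ?_))
  change ((z - (x : ℂ))⁻¹).im = -z.im * ‖(z - (x : ℂ))⁻¹‖ ^ 2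
  rw [inv_im, norm_inv, inv_pow, Complex.sq_norm]
  simp [div_eq_mul_inv]

lemma im_cauchyTransform_neg [IsFiniteMeasure μ] [NeZero μ] (hz : 0 < z.im) :
    (cauchyTransform μ z).im < 0 := by
  rw [im_cauchyTransform hz, neg_mul, neg_neg_iff_pos]
  refine mul_pos hz ?_
  rw [integral_pos_iff_support_of_nonneg (fun x => by positivity)
    (integrable_norm_inv_sub_ofReal_sq hz),
    Function.support_eq_univ fun x => by simp [sub_ofReal_ne_zero hz x]]
  exact Measure.measure_univ_pos.mpr (NeZero.ne μ)

lemma norm_cauchyTransform_sq_le [IsProbabilityMeasure μ] (hz : 0 < z.im) :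
    ‖cauchyTransform μ z‖ ^ 2 ≤ ∫ x : ℝ, ‖(z - (x : ℂ))⁻¹‖ ^ 2 ∂μ :=
  ((convexOn_norm convex_univ).pow (fun _ _ => norm_nonneg _) 2).map_integral_le
    (continuous_norm.pow 2).continuousOn isClosed_univ (.of_forall fun _ => Set.mem_univ _)
    (integrable_inv_sub_ofReal hz) (integrable_norm_inv_sub_ofReal_sq hz)

lemma im_le_im_inv_cauchyTransform [IsProbabilityMeasure μ] (hz : 0 < z.im) :
    z.im ≤ (cauchyTransform μ z)⁻¹.im := by
  have hG : 0 < ‖cauchyTransform μ z‖ ^ 2 :=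
    pow_pos (norm_pos_iff.mpr fun h => by simpa [h] using im_cauchyTransform_neg (μ := μ) hz) 2
  rw [inv_im, im_cauchyTransform hz, normSq_eq_norm_sq, neg_mul, neg_neg, le_div_iff₀ hG]
  exact mul_le_mul_of_nonneg_left (norm_cauchyTransform_sq_le hz) hz.le

end CauchyTransform

theorem subordination_identities_general
    (μ : Measure ℝ) [IsProbabilityMeasure μ]
    (Gmu Gnu : ℂ → ℂ)
    (hGmu : ∀ z : ℂ, Gmu z = ∫ x : ℝ, (z - (x : ℂ))⁻¹ ∂μ)
    (Fmu Fnu : ℂ → ℂ)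
    (hFmu : ∀ z : ℂ, Fmu z = (Gmu z)⁻¹)
    (hFnu : ∀ z : ℂ, Fnu z = (Gnu z)⁻¹)
    (hmu hnu : ℂ → ℂ)
    (hhmu : ∀ z : ℂ, hmu z = Fmu z - z)
    (hhnu : ∀ z : ℂ, hnu z = Fnu z - z)
    (b : ℂ) (hb : 0 < b.im)
    (w₁ : ℂ) (hw₁ : 0 < w₁.im) (hfix : hnu (hmu w₁ + b) + b = w₁)
    (w₂ : ℂ) (hw₂ : w₂ = hmu w₁ + b) :
    0 < w₂.im ∧
      hmu (hnu w₂ + b) + b = w₂ ∧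
      Fmu w₁ = Fnu w₂ ∧
      Fnu w₂ = w₁ + w₂ - b ∧
      Gmu w₁ = Gnu w₂ := by
  have hfix₂ : hnu w₂ + b = w₁ := by rw [hw₂]; exact hfix
  have hF₁ : Fmu w₁ = w₁ + w₂ - b := by linear_combination -hhmu w₁ - hw₂
  have hF₂ : Fnu w₂ = w₁ + w₂ - b := by linear_combination hfix₂ - hhnu w₂
  have hF₁_im : w₁.im ≤ (Fmu w₁).im := by
    rw [hFmu, hGmu]
    exact im_le_im_inv_cauchyTransform hw₁
  have hw₂_im : 0 < w₂.im := by
    rw [hw₂, add_im, hhmu, sub_im]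
    linarith
  have hF : Fmu w₁ = Fnu w₂ := hF₁.trans hF₂.symm
  refine ⟨hw₂_im, by rw [hfix₂, hw₂], hF, hF₂, ?_⟩
  rw [hFmu, hFnu] at hF
  exact inv_inj.mp hF

/-- Scalar subordination identities (second bullet of Theorem 3.1 of the paper, with `B = ℂ`):
if `ω₁(b)` in the upper half-plane is a fixed point of `ω ↦ h_ν(h_μ(ω) + b) + b` and
`ω₂(b) = h_μ(ω₁(b)) + b`, then `ω₂(b)` lies in the upper half-plane, is a fixed point of
`ω ↦ h_μ(h_ν(ω) + b) + b`, and `F_μ(ω₁(b)) = F_ν(ω₂(b)) = ω₁(b) + ω₂(b) - b`; in particular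
`G_μ(ω₁(b)) = G_ν(ω₂(b))`. Here `F_μ = 1/G_μ` and `h_μ(z) = F_μ(z) - z`. -/
theorem subordination_identities
    (μ ν : Measure ℝ) [IsProbabilityMeasure μ] [IsProbabilityMeasure ν]
    (Gmu Gnu : ℂ → ℂ)
    (hGmu : ∀ z : ℂ, Gmu z = ∫ x : ℝ, (z - (x : ℂ))⁻¹ ∂μ)
    (hGnu : ∀ z : ℂ, Gnu z = ∫ x : ℝ, (z - (x : ℂ))⁻¹ ∂ν)
    (Fmu Fnu : ℂ → ℂ)
    (hFmu : ∀ z : ℂ, Fmu z = (Gmu z)⁻¹)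
    (hFnu : ∀ z : ℂ, Fnu z = (Gnu z)⁻¹)
    (hmu hnu : ℂ → ℂ)
    (hhmu : ∀ z : ℂ, hmu z = Fmu z - z)
    (hhnu : ∀ z : ℂ, hnu z = Fnu z - z)
    (b : ℂ) (hb : 0 < b.im)
    (w₁ : ℂ) (hw₁ : 0 < w₁.im) (hfix : hnu (hmu w₁ + b) + b = w₁)
    (w₂ : ℂ) (hw₂ : w₂ = hmu w₁ + b) :
    0 < w₂.im ∧
      hmu (hnu w₂ + b) + b = w₂ ∧
      Fmu w₁ = Fnu w₂ ∧
      Fnu w₂ = w₁ + w₂ - b ∧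
      Gmu w₁ = Gnu w₂ :=
  subordination_identities_general μ Gmu Gnu hGmu Fmu Fnu hFmu hFnu hmu hnu hhmu hhnu b hb w₁ hw₁
    hfix w₂ hw₂
end

section
/- Let S₁, S₂ ∈ M_N(ℂ) be Hermitian matrices, P₂ = S₁S₂ + S₂S₁, and let L ∈ M₃(M_N(ℂ)) ≅ M_{3N}(ℂ) be the block matrix [[0, S₁, S₂], [S₁, 0, −I_N], [S₂, −I_N, 0]]. For z in the upper half-plane ℂ⁺ and ε > 0 let Λ_ε(z) = diag(z·I_N, iε·I_N, iε·I_N) ∈ M_{3N}(ℂ). Then: (i) z·I_N − P₂ is invertible; (ii) for all sufficiently small ε > 0 the matrix Λ_ε(z) − L is invertible in M_{3N}(ℂ); and (iii) the top-left N × N block of (Λ_ε(z) − L)⁻¹ converges to (z·I_N − P₂)⁻¹ as ε → 0⁺. In particular, G_{P₂}(z) := (1/N) tr((z·I_N − P₂)⁻¹) = lim_{ε→0⁺} (1/N) tr of the top-left N × N block of (Λ_ε(z) − L)⁻¹. -/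
open Matrix Filter Topology

private theorem ringInverse_map {R S : Type*} [Ring R] [Ring S] (e : R ≃+* S) (x : R) :
    Ring.inverse (e x) = e (Ring.inverse x) := by
  by_cases h : IsUnit x
  · obtain ⟨u, rfl⟩ := h
    rw [Ring.inverse_unit]
    rw [show e (u : R) = ((Units.map (e : R →* S) u : Sˣ) : S) from rfl, Ring.inverse_unit,
      ← MonoidHom.map_inv, Units.coe_map]
    rfl
  · rw [Ring.inverse_non_unit _ h, Ring.inverse_non_unit, map_zero]
    intro hu
    exact h (by simpa using hu.map e.symm.toMonoidHom)

open scoped ComplexOrder in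
private theorem herm_resolvent_unit {N : ℕ} {P : Matrix (Fin N) (Fin N) ℂ}
    (hP : P.IsHermitian) {z : ℂ} (hz : z.im ≠ 0) :
    IsUnit (z • (1 : Matrix (Fin N) (Fin N) ℂ) - P) := by
  rw [Matrix.isUnit_iff_isUnit_det, isUnit_iff_ne_zero]
  intro hdet
  obtain ⟨v, hv, hmul⟩ := (Matrix.exists_mulVec_eq_zero_iff).2 hdet
  have hPv : P *ᵥ v = z • v := by
    rw [Matrix.sub_mulVec, Matrix.smul_mulVec, Matrix.one_mulVec, sub_eq_zero] at hmul
    exact hmul.symm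
  set s : ℂ := star v ⬝ᵥ v with hs
  have hsne : s ≠ 0 := fun h => hv (dotProduct_star_self_eq_zero.mp h)
  have hss : star s = s := (Matrix.star_dotProduct v v).symm
  set c : ℂ := star v ⬝ᵥ (P *ᵥ v) with hc
  have hc1 : c = z * s := by rw [hc, hPv, dotProduct_smul, smul_eq_mul, hs]
  have e1 : c = star (star (P *ᵥ v) ⬝ᵥ v) := Matrix.star_dotProduct _ _
  have hc2 : star c = c :=
    calc star c = star (P *ᵥ v) ⬝ᵥ v := by rw [e1, star_star]
    _ = star v ᵥ* Pᴴ ⬝ᵥ v := by rw [Matrix.star_mulVec]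
    _ = star v ⬝ᵥ (Pᴴ *ᵥ v) := (Matrix.dotProduct_mulVec _ _ _).symm
    _ = c := by rw [hP.eq, hc]
  rw [hc1, star_mul', hss] at hc2
  have hzz : (starRingEnd ℂ) z = z := mul_right_cancel₀ hsne (by simpa using hc2)
  exact hz (Complex.conj_eq_iff_im.mp hzz)

/-- Matrix-algebra instance of Corollary 4.1 of the paper. Let `S₁, S₂ ∈ M_N(ℂ)` be
Hermitian, `P₂ = S₁S₂ + S₂S₁`, let `L` be the self-adjoint linearization
`[[0, S₁, S₂], [S₁, 0, -I_N], [S₂, -I_N, 0]]` of `P₂` (viewed as a `3 × 3` matrix over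
`M_N(ℂ)`), and for `ε > 0` let `Λ_ε(z) = diag(z·I_N, iε·I_N, iε·I_N)`. Then for `z` in the
upper half-plane: (i) `z·I_N - P₂` is invertible; (ii) `Λ_ε(z) - L` is invertible for all
sufficiently small `ε > 0`; (iii) the top-left `N × N` block of `(Λ_ε(z) - L)⁻¹` converges
to `(z·I_N - P₂)⁻¹` as `ε → 0⁺`; in particular
`(1/N)·tr((z·I_N - P₂)⁻¹) = lim_{ε→0⁺} (1/N)·tr` of that top-left block. -/
theorem linearization_resolvent_limit
    (N : ℕ) (hN : 0 < N)
    (S₁ S₂ : Matrix (Fin N) (Fin N) ℂ)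
    (h₁ : S₁.IsHermitian) (h₂ : S₂.IsHermitian)
    (P₂ : Matrix (Fin N) (Fin N) ℂ) (hP : P₂ = S₁ * S₂ + S₂ * S₁)
    (L : Matrix (Fin 3) (Fin 3) (Matrix (Fin N) (Fin N) ℂ))
    (hL : L = !![0, S₁, S₂; S₁, 0, -1; S₂, -1, 0])
    (Λ : ℝ → ℂ → Matrix (Fin 3) (Fin 3) (Matrix (Fin N) (Fin N) ℂ))
    (hΛ : ∀ (ε : ℝ) (z : ℂ), Λ ε z =
      !![z • 1, 0, 0;
         0, ((ε : ℂ) * Complex.I) • 1, 0;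
         0, 0, ((ε : ℂ) * Complex.I) • 1])
    (z : ℂ) (hz : 0 < z.im) :
    IsUnit (z • (1 : Matrix (Fin N) (Fin N) ℂ) - P₂) ∧
      (∀ᶠ ε : ℝ in 𝓝[>] 0, IsUnit (Λ ε z - L)) ∧
      Tendsto (fun ε : ℝ => Ring.inverse (Λ ε z - L) 0 0) (𝓝[>] 0)
        (𝓝 (Ring.inverse (z • (1 : Matrix (Fin N) (Fin N) ℂ) - P₂))) ∧
      Tendsto (fun ε : ℝ => (N : ℂ)⁻¹ * Matrix.trace (Ring.inverse (Λ ε z - L) 0 0))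
        (𝓝[>] 0)
        (𝓝 ((N : ℂ)⁻¹ *
          Matrix.trace (Ring.inverse (z • (1 : Matrix (Fin N) (Fin N) ℂ) - P₂)))) := by
  have hP₂ : P₂.IsHermitian := by
    rw [hP, Matrix.IsHermitian, conjTranspose_add, conjTranspose_mul, conjTranspose_mul,
      h₁.eq, h₂.eq, add_comm]
  set Z := z • (1 : Matrix (Fin N) (Fin N) ℂ) with hZ
  have hUA : IsUnit (Z - P₂) := herm_resolvent_unit hP₂ (ne_of_gt hz)
  set T := Ring.inverse (Z - P₂) with hTdef
  have hT1 : (Z - P₂) * T = 1 := Ring.mul_inverse_cancel _ hUA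
  have hT2 : T * (Z - P₂) = 1 := Ring.inverse_mul_cancel _ hUA
  set V : Matrix (Fin 3) (Fin 3) (Matrix (Fin N) (Fin N) ℂ) :=
    !![T, T * S₂, T * S₁;
       S₂ * T, S₂ * T * S₂, 1 + S₂ * T * S₁;
       S₁ * T, 1 + S₁ * T * S₂, S₁ * T * S₁] with hV
  have hMV : (!![Z, -S₁, -S₂; -S₁, 0, 1; -S₂, 1, 0] :
      Matrix (Fin 3) (Fin 3) (Matrix (Fin N) (Fin N) ℂ)) * V = 1 := by
    rw [hV, Matrix.mul_fin_three, Matrix.one_fin_three]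
    refine congrArg Matrix.of (Matrix.vec3_eq (Matrix.vec3_eq ?_ ?_ ?_)
      (Matrix.vec3_eq ?_ ?_ ?_) (Matrix.vec3_eq ?_ ?_ ?_))
    · calc Z * T + -S₁ * (S₂ * T) + -S₂ * (S₁ * T)
          = (Z - (S₁ * S₂ + S₂ * S₁)) * T := by noncomm_ring
        _ = 1 := by rw [← hP, hT1]
    · calc Z * (T * S₂) + -S₁ * (S₂ * T * S₂) + -S₂ * (1 + S₁ * T * S₂)
          = (Z - (S₁ * S₂ + S₂ * S₁)) * T * S₂ - S₂ := by noncomm_ring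
        _ = 0 := by rw [← hP, hT1, one_mul, sub_self]
    · calc Z * (T * S₁) + -S₁ * (1 + S₂ * T * S₁) + -S₂ * (S₁ * T * S₁)
          = (Z - (S₁ * S₂ + S₂ * S₁)) * T * S₁ - S₁ := by noncomm_ring
        _ = 0 := by rw [← hP, hT1, one_mul, sub_self]
    · noncomm_ring
    · noncomm_ring
    · noncomm_ring
    · noncomm_ring
    · noncomm_ring
    · noncomm_ring
  have hVM : V * (!![Z, -S₁, -S₂; -S₁, 0, 1; -S₂, 1, 0] :
      Matrix (Fin 3) (Fin 3) (Matrix (Fin N) (Fin N) ℂ)) = 1 := by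
    rw [hV, Matrix.mul_fin_three, Matrix.one_fin_three]
    refine congrArg Matrix.of (Matrix.vec3_eq (Matrix.vec3_eq ?_ ?_ ?_)
      (Matrix.vec3_eq ?_ ?_ ?_) (Matrix.vec3_eq ?_ ?_ ?_))
    · calc T * Z + T * S₂ * -S₁ + T * S₁ * -S₂
          = T * (Z - (S₁ * S₂ + S₂ * S₁)) := by noncomm_ring
        _ = 1 := by rw [← hP, hT2]
    · noncomm_ring
    · noncomm_ring
    · calc S₂ * T * Z + S₂ * T * S₂ * -S₁ + (1 + S₂ * T * S₁) * -S₂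
          = S₂ * (T * (Z - (S₁ * S₂ + S₂ * S₁))) - S₂ := by noncomm_ring
        _ = 0 := by rw [← hP, hT2, mul_one, sub_self]
    · noncomm_ring
    · noncomm_ring
    · calc S₁ * T * Z + (1 + S₁ * T * S₂) * -S₁ + S₁ * T * S₁ * -S₂
          = S₁ * (T * (Z - (S₁ * S₂ + S₂ * S₁))) - S₁ := by noncomm_ring
        _ = 0 := by rw [← hP, hT2, mul_one, sub_self]
    · noncomm_ring
    · noncomm_ring
  have hM0 : Λ 0 z - L = !![Z, -S₁, -S₂; -S₁, 0, 1; -S₂, 1, 0] := by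
    rw [hΛ, hL]
    ext i j
    fin_cases i <;> fin_cases j <;> simp [hZ, Matrix.sub_apply, Matrix.vecHead, Matrix.vecTail]
  set e := Matrix.compRingEquiv (Fin 3) (Fin N) ℂ with he
  have hu0 : IsUnit (Λ 0 z - L) := by
    rw [hM0]; exact ⟨⟨_, V, hMV, hVM⟩, rfl⟩
  have hRinv0 : Ring.inverse (Λ 0 z - L) = V := by
    rw [hM0]; exact Ring.inverse_unit ⟨_, V, hMV, hVM⟩
  have hdet0 : (e (Λ 0 z - L)).det ≠ 0 :=
    isUnit_iff_ne_zero.mp ((Matrix.isUnit_iff_isUnit_det _).mp (hu0.map e))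
  -- continuity of ε ↦ Λ ε z - L
  have hMfun : ∀ ε : ℝ, Λ ε z - L =
      !![Z, -S₁, -S₂;
         -S₁, ((ε : ℂ) * Complex.I) • 1, 1;
         -S₂, 1, ((ε : ℂ) * Complex.I) • 1] := by
    intro ε
    rw [hΛ, hL]
    ext i j
    fin_cases i <;> fin_cases j <;> simp [hZ, Matrix.sub_apply, Matrix.vecHead, Matrix.vecTail]
  have hMc : Continuous fun ε : ℝ => Λ ε z - L := by
    simp only [hMfun]
    apply continuous_matrix
    intro i j
    fin_cases i <;> fin_cases j <;>
      simp only [Matrix.cons_val', Matrix.cons_val_zero, Matrix.cons_val_one,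
        Matrix.head_cons, Matrix.empty_val', Matrix.cons_val_fin_one, Matrix.head_fin_const,
        Matrix.cons_val_two, Matrix.tail_cons, Matrix.of_apply] <;>
      first
        | exact continuous_const
        | exact (Complex.continuous_ofReal.mul continuous_const).smul continuous_const
  have he_cont : Continuous (e : Matrix (Fin 3) (Fin 3) (Matrix (Fin N) (Fin N) ℂ) →
      Matrix (Fin 3 × Fin N) (Fin 3 × Fin N) ℂ) := by
    apply continuous_matrix
    intro p q
    simp only [he, Matrix.compRingEquiv_apply]
    exact (continuous_apply q.2).comp ((continuous_apply p.2).comp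
      ((continuous_apply q.1).comp (continuous_apply p.1)))
  have hfc : Continuous fun ε : ℝ => e (Λ ε z - L) := he_cont.comp hMc
  have hdetinv : ContinuousAt (Ring.inverse : ℂ → ℂ) (e (Λ 0 z - L)).det := by
    rw [Ring.inverse_eq_inv']
    exact continuousAt_inv₀ hdet0
  have htb' : ContinuousAt (fun ε : ℝ => (e (Λ ε z - L))⁻¹) 0 :=
    ContinuousAt.comp (continuousAt_matrix_inv _ hdetinv) hfc.continuousAt
  have htb : Tendsto (fun ε : ℝ => (e (Λ ε z - L))⁻¹) (𝓝[>] (0 : ℝ))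
      (𝓝 ((e (Λ 0 z - L))⁻¹)) :=
    htb'.tendsto.mono_left nhdsWithin_le_nhds
  have hkey : ∀ ε : ℝ, Ring.inverse (Λ ε z - L) = e.symm ((e (Λ ε z - L))⁻¹) := by
    intro ε
    rw [Matrix.nonsing_inv_eq_ringInverse, ringInverse_map e, RingEquiv.symm_apply_apply]
  have hblk : Continuous fun X : Matrix (Fin 3 × Fin N) (Fin 3 × Fin N) ℂ =>
      e.symm X 0 0 := by
    apply continuous_matrix
    intro i j
    show Continuous fun X : Matrix (Fin 3 × Fin N) (Fin 3 × Fin N) ℂ => X (0, i) (0, j)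
    exact (continuous_apply _).comp (continuous_apply _)
  have hval : e.symm ((e (Λ 0 z - L))⁻¹) 0 0 = T := by
    rw [← hkey 0, hRinv0, hV]
    simp
  have h3 : Tendsto (fun ε : ℝ => Ring.inverse (Λ ε z - L) 0 0) (𝓝[>] (0 : ℝ)) (𝓝 T) := by
    have := (hblk.tendsto ((e (Λ 0 z - L))⁻¹)).comp htb
    rw [hval] at this
    exact this.congr fun ε => by simp only [Function.comp_apply]; rw [hkey ε]
  have h2 : ∀ᶠ ε : ℝ in 𝓝[>] 0, IsUnit (Λ ε z - L) := by
    have hdc : ContinuousAt (fun ε : ℝ => (e (Λ ε z - L)).det) 0 :=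
      (hfc.matrix_det).continuousAt
    have hev : ∀ᶠ ε : ℝ in 𝓝[>] 0, (e (Λ ε z - L)).det ≠ 0 :=
      (hdc.eventually_ne hdet0).filter_mono nhdsWithin_le_nhds
    refine hev.mono fun ε hε => ?_
    have : IsUnit (e (Λ ε z - L)) :=
      (Matrix.isUnit_iff_isUnit_det _).mpr (isUnit_iff_ne_zero.mpr hε)
    simpa using this.map e.symm
  have htr : Continuous fun X : Matrix (Fin N) (Fin N) ℂ => Matrix.trace X := by
    simp only [Matrix.trace, Matrix.diag]
    exact continuous_finset_sum _ fun i _ => (continuous_apply i).comp (continuous_apply i)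
  have h4 : Tendsto (fun ε : ℝ => (N : ℂ)⁻¹ * Matrix.trace (Ring.inverse (Λ ε z - L) 0 0))
      (𝓝[>] (0 : ℝ)) (𝓝 ((N : ℂ)⁻¹ * Matrix.trace T)) :=
    ((continuous_const.mul htr).tendsto _).comp h3
  exact ⟨hUA, h2, h3, h4⟩
end
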